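/- arXiv:1903.09016 — 3 statements merged into one kernel-verified Lean document; each statement's English description precedes it below -/
import Mathlib

section
/- Let 2 ≤ k ≤ N. The functions D̃₁₁^{(N,k)} and D̃₁₂^{(N,k)} : ℂ^{2k} → ℂ (the Chalker–Mehlig integral representations of the conditional diagonal and off-diagonal overlaps with the conjugate variables treated as independent) are analytic (entire) on ℂ^{2k}, and for every point (λ₁,μ₁,…,λ_k,μ_k) ∈ ℂ^{2k} with (λ₁−λ₂)(μ₁−μ₂) ≠ 1 one has D̃₁₂^{(N,k)}(λ₁,μ₁,λ₂,μ₂,λ₃,μ₃,…,λ_k,μ_k) = −( e^{−(λ₁−λ₂)(μ₁−μ₂)} / (1−(λ₁−λ₂)(μ₁−μ₂)) ) · D̃₁₁^{(N,k)}(λ₁,μ₂,λ₂,μ₁,λ₃,μ₃,…,λ_k,μ_k) (i.e. the relation holds after swapping the variables μ₁ and μ₂ in D̃₁₁). -/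
open ComplexConjugate Filter MeasureTheory Topology

noncomputable section

/-- Exponential polynomial `e_p(x) = ∑_{k=0}^p x^k/k!`. -/
def epol (p : ℕ) (x : ℂ) : ℂ := ∑ k ∈ Finset.range (p + 1), x ^ k / (Nat.factorial k : ℂ)

/-- `f_p(x) = (p+1)·e_p(x) - x·e_{p-1}(x)`, with `e_{-1} ≡ 0`. -/
def fpol (p : ℕ) (x : ℂ) : ℂ :=
  ((p : ℂ) + 1) * epol p x - x * (if p = 0 then 0 else epol (p - 1) x)

/-- The polynomial `𝔉_n(x,y,z)`. -/
def Fgoth (n : ℕ) (x y z : ℂ) : ℂ :=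
  epol n (x * y) * epol n (x * z) - epol n (x * y * z) * epol n x * (1 - x * (1 - y) * (1 - z))
    + ((1 - y) * (1 - z) / (Nat.factorial n : ℂ)) *
      (((x * y * z) ^ (n + 1) * epol n x - x ^ (n + 1) * epol n (x * y * z)) / (1 - y * z))

/-- The weight `ω(x,y|λ,μ) = (1/π)(1+(x-λ)(y-μ))e^{-xy}`. -/
def omegaW (x y l m : ℂ) : ℂ :=
  (1 / (Real.pi : ℂ)) * (1 + (x - l) * (y - m)) * Complex.exp (-(x * y))

/-- The finite-`N` reduced kernel `κ^{(N)}(x̄,y|λ,λ̄)`. -/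
def kapN (N : ℕ) (xb y l lb : ℂ) : ℂ :=
  (((N : ℂ) + 1) * Fgoth (N + 1) (l * lb) (xb / lb) (y / l)
      - l * lb * Fgoth N (l * lb) (xb / lb) (y / l)) /
    ((xb - lb) ^ 2 * (y - l) ^ 2 * fpol N (l * lb))

/-- The finite-`N` kernel `K₁₁^{(N)}(x,x̄,y,ȳ|λ,λ̄)`. -/
def K11N (N : ℕ) (x xb y yb l lb : ℂ) : ℂ := omegaW x xb l lb * kapN N xb y l lb

/-- The finite-`N` kernel `K₁₂^{(N)}(x,x̄,y,ȳ|u,ū,v,v̄)`. -/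
def K12N (N : ℕ) (x xb y yb u ub v vb : ℂ) : ℂ :=
  omegaW x xb u vb / kapN N ub v u vb *
    (kapN N ub v u vb * kapN N xb y u vb - kapN N ub y u vb * kapN N xb v u vb)

/-- `Z_N = π^N ∏_{j=1}^N j!`. -/
def Zconst (N : ℕ) : ℂ := (Real.pi : ℂ) ^ N * ∏ j ∈ Finset.Icc 1 N, (Nat.factorial j : ℂ)

/-- Vandermonde product `∏_{0 ≤ j < i < n} (v i - v j)`. -/
def vdm (n : ℕ) (v : ℕ → ℂ) : ℂ := ∏ i ∈ Finset.range n, ∏ j ∈ Finset.range i, (v i - v j)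

/-- Pads the `k` conditioned eigenvalues `lam` with the `N-k` integration variables `w`. -/
def pad (N k : ℕ) (lam : Fin k → ℂ) (w : Fin (N - k) → ℂ) (m : ℕ) : ℂ :=
  if h : m < k then lam ⟨m, h⟩ else if h2 : m - k < N - k then w ⟨m - k, h2⟩ else 0

/-- Conditional diagonal overlap `D₁₁^{(N,k)}`. -/
def D11 (N k : ℕ) (lam : Fin k → ℂ) : ℂ :=
  (Nat.factorial N : ℂ) / (Nat.factorial (N - k) : ℂ) / Zconst N *
    Complex.exp (-(pad N k lam (fun _ => 0) 0 * conj (pad N k lam (fun _ => 0) 0))) *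
    ∫ w : Fin (N - k) → ℂ,
      vdm (N - 1) (fun m => pad N k lam w (m + 1)) *
        conj (vdm (N - 1) (fun m => pad N k lam w (m + 1))) *
        ∏ m ∈ Finset.Icc 1 (N - 1),
          ((1 + (pad N k lam w m - pad N k lam w 0) *
                (conj (pad N k lam w m) - conj (pad N k lam w 0))) *
            Complex.exp (-(pad N k lam w m * conj (pad N k lam w m))))

/-- Conditional off-diagonal overlap `D₁₂^{(N,k)}`. -/
def D12 (N k : ℕ) (lam : Fin k → ℂ) : ℂ :=
  -((Nat.factorial N : ℂ) / (Nat.factorial (N - k) : ℂ) / Zconst N *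
    Complex.exp (-(pad N k lam (fun _ => 0) 0 * conj (pad N k lam (fun _ => 0) 0)
        + pad N k lam (fun _ => 0) 1 * conj (pad N k lam (fun _ => 0) 1))) *
    ∫ w : Fin (N - k) → ℂ,
      vdm (N - 1) (fun m => pad N k lam w (m + 1)) *
        vdm (N - 1) (fun m => conj (pad N k lam w (if m = 0 then 0 else m + 1))) *
        ∏ m ∈ Finset.Icc 2 (N - 1),
          ((1 + (pad N k lam w m - pad N k lam w 0) *
                (conj (pad N k lam w m) - conj (pad N k lam w 1))) *
            Complex.exp (-(pad N k lam w m * conj (pad N k lam w m)))))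

/-- `D̃₁₁^{(N,k)}` with the conjugated variables treated as independent. -/
def D11t (N k : ℕ) (lam mu : Fin k → ℂ) : ℂ :=
  (Nat.factorial N : ℂ) / (Nat.factorial (N - k) : ℂ) / Zconst N *
    Complex.exp (-(pad N k lam (fun _ => 0) 0 * pad N k mu (fun _ => 0) 0)) *
    ∫ w : Fin (N - k) → ℂ,
      vdm (N - 1) (fun m => pad N k lam w (m + 1)) *
        vdm (N - 1) (fun m => pad N k mu (fun i => conj (w i)) (m + 1)) *
        ∏ m ∈ Finset.Icc 1 (N - 1),
          ((1 + (pad N k lam w m - pad N k lam w 0) *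
                (pad N k mu (fun i => conj (w i)) m - pad N k mu (fun i => conj (w i)) 0)) *
            Complex.exp (-(pad N k lam w m * pad N k mu (fun i => conj (w i)) m)))

/-- `D̃₁₂^{(N,k)}` with the conjugated variables treated as independent. -/
def D12t (N k : ℕ) (lam mu : Fin k → ℂ) : ℂ :=
  -((Nat.factorial N : ℂ) / (Nat.factorial (N - k) : ℂ) / Zconst N *
    Complex.exp (-(pad N k lam (fun _ => 0) 0 * pad N k mu (fun _ => 0) 0
        + pad N k lam (fun _ => 0) 1 * pad N k mu (fun _ => 0) 1)) *
    ∫ w : Fin (N - k) → ℂ,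
      vdm (N - 1) (fun m => pad N k lam w (m + 1)) *
        vdm (N - 1) (fun m => pad N k mu (fun i => conj (w i)) (if m = 0 then 0 else m + 1)) *
        ∏ m ∈ Finset.Icc 2 (N - 1),
          ((1 + (pad N k lam w m - pad N k lam w 0) *
                (pad N k mu (fun i => conj (w i)) m - pad N k mu (fun i => conj (w i)) 1)) *
            Complex.exp (-(pad N k lam w m * pad N k mu (fun i => conj (w i)) m))))

/-- Bulk weight `ω^{bulk}`. -/
def omegaBulk (u ub l lb : ℂ) : ℂ :=
  (1 / (Real.pi : ℂ)) * (1 + (u - l) * (ub - lb)) * Complex.exp (-((u - l) * (ub - lb)))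

/-- Bulk reduced kernel `κ^{bulk}(ū,v|λ,λ̄) = (1+(w-1)e^w)/w²`, `w = (ū-λ̄)(v-λ)`. -/
def kapBulk (ub v l lb : ℂ) : ℂ :=
  (1 + ((ub - lb) * (v - l) - 1) * Complex.exp ((ub - lb) * (v - l))) /
    ((ub - lb) * (v - l)) ^ 2

def K11bulk (u ub v vb l lb : ℂ) : ℂ := omegaBulk u ub l lb * kapBulk ub v l lb

def K12bulk (x xb y yb u ub v vb : ℂ) : ℂ :=
  omegaBulk x xb u vb / kapBulk ub v u vb *
    (kapBulk ub v u vb * kapBulk xb y u vb - kapBulk ub y u vb * kapBulk xb v u vb)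

/-- `F(a) = (2π)^{-1/2} ∫₀^∞ e^{-(a+t)²/2} dt`, entire continuation of `(1/2)erfc(a/√2)`. -/
def Ferf (a : ℂ) : ℂ :=
  (1 / (Real.sqrt (2 * Real.pi) : ℂ)) *
    ∫ t in Set.Ioi (0 : ℝ), Complex.exp (-((a + (t : ℂ)) ^ 2) / 2)

/-- The function `H(a,b,c,d,f)` from the edge scaling limit. -/
def Hedge (a b c d f : ℂ) : ℂ :=
  -(Real.sqrt (2 * Real.pi) : ℂ) /
      (1 - (Real.sqrt (2 * Real.pi) : ℂ) * a * Complex.exp (a ^ 2 / 2) * Ferf a) *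
    deriv (fun x : ℂ =>
      Complex.exp ((a + x) ^ 2 / 2) *
        (Complex.exp (-f) * Ferf (b + x) * Ferf (c + x) - Ferf (d + x) * Ferf (a + x) +
          f * Ferf d * Ferf (a + x))) 0

def omegaEdge (x xb l lb : ℂ) : ℂ :=
  (1 / (Real.pi : ℂ)) * (1 + (x - l) * (xb - lb)) * Complex.exp (-(x * xb))

def kapEdge (xb y l lb : ℂ) : ℂ :=
  Complex.exp (xb * y) * Hedge (l + lb) (l + xb) (y + lb) (y + xb) ((l - y) * (lb - xb)) /
    ((l - y) ^ 2 * (lb - xb) ^ 2)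

def K11edge (x xb y yb l lb : ℂ) : ℂ := omegaEdge x xb l lb * kapEdge xb y l lb

def K12edge (x xb y yb u ub v vb : ℂ) : ℂ :=
  omegaEdge x xb u vb / kapEdge ub v u vb *
    (kapEdge ub v u vb * kapEdge xb y u vb - kapEdge ub y u vb * kapEdge xb v u vb)

/-- Index embedding `Fin (k-1) → Fin k`, `i ↦ i+1`. -/
def sh1 {k : ℕ} (i : Fin (k - 1)) : Fin k := ⟨i.val + 1, by have := i.isLt; omega⟩

/-- Index embedding `Fin (k-2) → Fin k`, `i ↦ i+2`. -/
def sh2 {k : ℕ} (i : Fin (k - 2)) : Fin k := ⟨i.val + 2, by have := i.isLt; omega⟩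

def ev0 {k : ℕ} (lam : Fin k → ℂ) : ℂ := if h : 0 < k then lam ⟨0, h⟩ else 0

def ev1 {k : ℕ} (lam : Fin k → ℂ) : ℂ := if h : 1 < k then lam ⟨1, h⟩ else 0

/-- The edge overlap function `D₁₁^{edge,k}`. -/
def D11edgeF (k : ℕ) (lam : Fin k → ℂ) : ℂ :=
  (1 / (Real.sqrt (2 * Real.pi ^ 3) : ℂ)) *
    (Complex.exp (-((ev0 lam + conj (ev0 lam)) ^ 2 / 2)) -
      (Real.sqrt (2 * Real.pi) : ℂ) * (ev0 lam + conj (ev0 lam)) *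
        Ferf (ev0 lam + conj (ev0 lam))) *
    Matrix.det (Matrix.of fun i j : Fin (k - 1) =>
      K11edge (lam (sh1 i)) (conj (lam (sh1 i))) (lam (sh1 j)) (conj (lam (sh1 j)))
        (ev0 lam) (conj (ev0 lam)))

/-- The bulk overlap function `D₁₁^{bulk,k}`. -/
def D11bulkF (k : ℕ) (lam : Fin k → ℂ) : ℂ :=
  (1 / (Real.pi : ℂ)) *
    Matrix.det (Matrix.of fun i j : Fin (k - 1) =>
      K11bulk (lam (sh1 i)) (conj (lam (sh1 i))) (lam (sh1 j)) (conj (lam (sh1 j)))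
        (ev0 lam) (conj (ev0 lam)))

/-- The bulk off-diagonal overlap function `D₁₂^{bulk,k}`. -/
def D12bulkF (k : ℕ) (lam : Fin k → ℂ) : ℂ :=
  -(1 / (Real.pi : ℂ) ^ 2) * kapBulk (conj (ev0 lam)) (ev1 lam) (ev0 lam) (conj (ev1 lam)) *
    Matrix.det (Matrix.of fun i j : Fin (k - 2) =>
      K12bulk (lam (sh2 i)) (conj (lam (sh2 i))) (lam (sh2 j)) (conj (lam (sh2 j)))
        (ev0 lam) (conj (ev0 lam)) (ev1 lam) (conj (ev1 lam)))

/-- The first-order differential operator `𝔇_m = 1 - (λ_m-λ₁)(μ_m-μ₁) - (λ_m-λ₁)∂/∂λ_m`. -/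
def Dop {k : ℕ} (m : Fin k) (g : (Fin k → ℂ) → (Fin k → ℂ) → ℂ)
    (lam mu : Fin k → ℂ) : ℂ :=
  (1 - (lam m - lam ⟨0, m.pos⟩) * (mu m - mu ⟨0, m.pos⟩)) * g lam mu -
    (lam m - lam ⟨0, m.pos⟩) * deriv (fun t => g (Function.update lam m t) mu) (lam m)

/-- Holomorphic extension `ρ̃` of the bulk `k`-point Ginibre correlation function. -/
def rhoT (k : ℕ) (lam mu : Fin k → ℂ) : ℂ :=
  ((Real.pi : ℂ) ^ k)⁻¹ * Complex.exp (-(∑ m, lam m * mu m)) *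
    Matrix.det (Matrix.of fun i j : Fin k => Complex.exp (mu i * lam j))

/-- Holomorphic extension `D̃₁₁^{bulk,k}` of the bulk conditional diagonal overlap. -/
def D11tBulk (k : ℕ) (lam mu : Fin k → ℂ) : ℂ :=
  ((Real.pi : ℂ) ^ k)⁻¹ *
    (∏ i : Fin (k - 1),
      (1 + (lam (sh1 i) - ev0 lam) * (mu (sh1 i) - ev0 mu)) /
          ((lam (sh1 i) - ev0 lam) ^ 2 * (mu (sh1 i) - ev0 mu) ^ 2) *
        Complex.exp (-((lam (sh1 i) - ev0 lam) * (mu (sh1 i) - ev0 mu)))) *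
    Matrix.det (Matrix.of fun m n : Fin (k - 1) =>
      1 - (1 - (mu (sh1 m) - ev0 mu) * (lam (sh1 n) - ev0 lam)) *
        Complex.exp ((mu (sh1 m) - ev0 mu) * (lam (sh1 n) - ev0 lam)))

/-- Monic bi-orthogonal polynomials `P_k(z)` for the weight `ω(·,·|λ,λ̄)`. -/
def Ppoly (l : ℂ) (k : ℕ) (z : ℂ) : ℂ :=
  ∑ m ∈ Finset.range (k + 1), l ^ (k - m) * (fpol m (l * conj l) / fpol k (l * conj l)) * z ^ m

/-- The reduced kernel `G^{(N)}(x,y,z)` as a double sum. -/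
def Gker (N : ℕ) (x y z : ℂ) : ℂ :=
  ∑ m ∈ Finset.range (N + 1), ∑ n ∈ Finset.range (N + 1),
    fpol m x * fpol n x * y ^ m * z ^ n *
      ∑ k ∈ Finset.Icc (max m n) N,
        x ^ k / ((Nat.factorial (k + 1) : ℂ) * fpol k x * fpol (k + 1) x)

end


/-! ### Auxiliary machinery for `statement0` -/

noncomputable section

namespace CMAux

abbrev P (k : ℕ) := (Fin k → ℂ) × (Fin k → ℂ)
abbrev W (n : ℕ) := Fin n → ℂ

/-- Functions of parameters and integration variables admitting a finite
analytic ⊗ polynomially-bounded decomposition. -/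
inductive Good (k n : ℕ) : (P k → W n → ℂ) → Prop
  | base_p (f : P k → ℂ) (hf : AnalyticOnNhd ℂ f Set.univ) : Good k n (fun p _ => f p)
  | base_w (g : W n → ℂ) (hg : Measurable g) (C : ℝ) (d : ℕ)
      (hb : ∀ w, ‖g w‖ ≤ C * (1 + ‖w‖) ^ d) : Good k n (fun _ w => g w)
  | add {F G} : Good k n F → Good k n G → Good k n (fun p w => F p w + G p w)
  | mul {F G} : Good k n F → Good k n G → Good k n (fun p w => F p w * G p w)

variable {k n : ℕ}

lemma Good.const (c : ℂ) : Good k n (fun _ _ => c) :=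
  Good.base_p (fun _ => c) analyticOnNhd_const

lemma Good.sub {F G : P k → W n → ℂ} (hF : Good k n F) (hG : Good k n G) :
    Good k n (fun p w => F p w - G p w) := by
  have := hF.add ((Good.const (-1)).mul hG)
  simpa [sub_eq_add_neg, neg_one_mul] using this

lemma Good.finsetProd {ι : Type*} {f : ι → P k → W n → ℂ} (s : Finset ι)
    (h : ∀ i ∈ s, Good k n (f i)) :
    Good k n (fun p w => ∏ i ∈ s, f i p w) := by
  classical
  induction s using Finset.induction_on with
  | empty => simpa using Good.const 1
  | insert a s' hx ih =>
      simp only [Finset.prod_insert hx]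
      exact (h a (Finset.mem_insert_self a s')).mul
        (ih fun i hi => h i (Finset.mem_insert_of_mem hi))

theorem Good.decomp {F : P k → W n → ℂ} (h : Good k n F) :
    ∃ (m : ℕ) (A : Fin m → P k → ℂ) (c : Fin m → W n → ℂ),
      (∀ j, AnalyticOnNhd ℂ (A j) Set.univ) ∧ (∀ j, Measurable (c j)) ∧
      (∀ j, ∃ (C : ℝ) (d : ℕ), ∀ w, ‖c j w‖ ≤ C * (1 + ‖w‖) ^ d) ∧
      (∀ p w, F p w = ∑ j, A j p * c j w) := by
  induction h with
  | base_p f hf =>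
      exact ⟨1, fun _ => f, fun _ _ => 1, fun _ => hf,
        fun _ => measurable_const, fun _ => ⟨1, 0, fun w => by simp⟩, fun p w => by simp⟩
  | base_w g hg C d hb =>
      exact ⟨1, fun _ _ => 1, fun _ => g, fun _ => analyticOnNhd_const,
        fun _ => hg, fun _ => ⟨C, d, hb⟩, fun p w => by simp⟩
  | @add F1 G1 hF hG ihF ihG =>
      obtain ⟨m₁, A₁, c₁, hA₁, hc₁, hb₁, he₁⟩ := ihF
      obtain ⟨m₂, A₂, c₂, hA₂, hc₂, hb₂, he₂⟩ := ihG
      refine ⟨m₁ + m₂, Fin.addCases A₁ A₂, Fin.addCases c₁ c₂,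
        fun j => ?_, fun j => ?_, fun j => ?_, fun p w => ?_⟩
      · refine Fin.addCases (motive := fun j =>
          AnalyticOnNhd ℂ (Fin.addCases (motive := fun _ => P k → ℂ) A₁ A₂ j) Set.univ)
          (fun i => ?_) (fun i => ?_) j
        · rw [Fin.addCases_left]; exact hA₁ i
        · rw [Fin.addCases_right]; exact hA₂ i
      · refine Fin.addCases (motive := fun j =>
          Measurable (Fin.addCases (motive := fun _ => W n → ℂ) c₁ c₂ j))
          (fun i => ?_) (fun i => ?_) j
        · rw [Fin.addCases_left]; exact hc₁ i
        · rw [Fin.addCases_right]; exact hc₂ i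
      · refine Fin.addCases (motive := fun j => ∃ (C : ℝ) (d : ℕ), ∀ w,
          ‖Fin.addCases (motive := fun _ => W n → ℂ) c₁ c₂ j w‖ ≤ C * (1 + ‖w‖) ^ d)
          (fun i => ?_) (fun i => ?_) j
        · rw [Fin.addCases_left]; exact hb₁ i
        · rw [Fin.addCases_right]; exact hb₂ i
      · show F1 p w + G1 p w = _
        rw [he₁ p w, he₂ p w, Fin.sum_univ_add]
        simp only [Fin.addCases_left, Fin.addCases_right]
  | @mul F1 G1 hF hG ihF ihG =>
      obtain ⟨m₁, A₁, c₁, hA₁, hc₁, hb₁, he₁⟩ := ihF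
      obtain ⟨m₂, A₂, c₂, hA₂, hc₂, hb₂, he₂⟩ := ihG
      refine ⟨m₁ * m₂, fun j p => A₁ (finProdFinEquiv.symm j).1 p * A₂ (finProdFinEquiv.symm j).2 p,
        fun j w => c₁ (finProdFinEquiv.symm j).1 w * c₂ (finProdFinEquiv.symm j).2 w,
        fun j => (hA₁ _).mul (hA₂ _), fun j => (hc₁ _).mul (hc₂ _),
        fun j => ?_, fun p w => ?_⟩
      · obtain ⟨C₁, d₁, h1⟩ := hb₁ (finProdFinEquiv.symm j).1
        obtain ⟨C₂, d₂, h2⟩ := hb₂ (finProdFinEquiv.symm j).2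
        refine ⟨C₁ * C₂, d₁ + d₂, fun w => ?_⟩
        calc ‖c₁ _ w * c₂ _ w‖ = ‖c₁ _ w‖ * ‖c₂ _ w‖ := norm_mul _ _
          _ ≤ (C₁ * (1 + ‖w‖) ^ d₁) * (C₂ * (1 + ‖w‖) ^ d₂) :=
              mul_le_mul (h1 w) (h2 w) (norm_nonneg _)
                (le_trans (norm_nonneg _) (h1 w))
          _ = C₁ * C₂ * (1 + ‖w‖) ^ (d₁ + d₂) := by ring
      · show F1 p w * G1 p w = _
        rw [he₁ p w, he₂ p w, Finset.sum_mul_sum,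
          ← Equiv.sum_comp finProdFinEquiv
            (fun j => (A₁ (finProdFinEquiv.symm j).1 p * A₂ (finProdFinEquiv.symm j).2 p) *
              (c₁ (finProdFinEquiv.symm j).1 w * c₂ (finProdFinEquiv.symm j).2 w)),
          Fintype.sum_prod_type]
        simp only [Equiv.symm_apply_apply]
        exact Finset.sum_congr rfl fun a _ => Finset.sum_congr rfl fun b _ => by ring

lemma polyGauss_le (d : ℕ) (r : ℝ) (hr : 0 ≤ r) (t : ℝ) (ht : 0 ≤ t) :
    (1 + t) ^ d * Real.exp (-(t ^ 2)) ≤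
      Real.exp (((d : ℝ) + r) ^ 2 / 4) * (1 + t) ^ (-r) := by
  have h1 : (0 : ℝ) < 1 + t := by linarith
  have key : ∀ m : ℝ, 0 ≤ m → (1 + t) ^ m * Real.exp (-(t ^ 2)) ≤ Real.exp (m ^ 2 / 4) := by
    intro m hm
    have h2 : (1 + t) ^ m ≤ (Real.exp t) ^ m :=
      Real.rpow_le_rpow h1.le (by linarith [Real.add_one_le_exp t]) hm
    have h3 : (Real.exp t) ^ m = Real.exp (t * m) := (Real.exp_mul t m).symm
    calc (1 + t) ^ m * Real.exp (-(t ^ 2))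
        ≤ Real.exp (t * m) * Real.exp (-(t ^ 2)) := by
          rw [← h3]; exact mul_le_mul_of_nonneg_right h2 (Real.exp_pos _).le
      _ = Real.exp (t * m - t ^ 2) := by rw [← Real.exp_add]; ring_nf
      _ ≤ Real.exp (m ^ 2 / 4) := Real.exp_le_exp.2 (by nlinarith [sq_nonneg (t - m/2)])
  have hB : (0 : ℝ) < (1 + t) ^ r := Real.rpow_pos_of_pos h1 r
  have hdr : (0 : ℝ) ≤ (d : ℝ) + r := by positivity
  have h4 := key ((d : ℝ) + r) hdr
  rw [Real.rpow_add h1] at h4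
  rw [Real.rpow_neg h1.le, ← Real.rpow_natCast (1 + t) d]
  calc (1 + t) ^ (d : ℝ) * Real.exp (-(t ^ 2))
      = ((1 + t) ^ (d : ℝ) * (1 + t) ^ r * Real.exp (-(t ^ 2))) / (1 + t) ^ r := by
        field_simp
    _ ≤ Real.exp (((d : ℝ) + r) ^ 2 / 4) / (1 + t) ^ r := by
        gcongr
    _ = Real.exp (((d : ℝ) + r) ^ 2 / 4) * ((1 + t) ^ r)⁻¹ := div_eq_mul_inv _ _

lemma norm_gauss (w : W n) :
    ‖∏ i, Complex.exp (-(w i * conj (w i)))‖ = Real.exp (-(∑ i, Complex.normSq (w i))) := by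
  rw [norm_prod]
  have h : ∀ i, ‖Complex.exp (-(w i * conj (w i)))‖ = Real.exp (-(Complex.normSq (w i))) := by
    intro i
    rw [Complex.norm_exp, Complex.mul_conj]
    norm_num
  simp only [h]
  rw [← Real.exp_sum]
  simp

lemma sq_norm_le_sum (w : W n) : ‖w‖ ^ 2 ≤ ∑ i, Complex.normSq (w i) := by
  have hs : ∀ i, Complex.normSq (w i) = ‖w i‖ ^ 2 := by
    intro i; rw [← Complex.sq_norm]
  simp only [hs]
  have hb : ‖w‖ ≤ Real.sqrt (∑ i, ‖w i‖ ^ 2) := by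
    rw [pi_norm_le_iff_of_nonneg (Real.sqrt_nonneg _)]
    intro i
    rw [← Real.sqrt_sq (norm_nonneg (w i))]
    exact Real.sqrt_le_sqrt (Finset.single_le_sum (fun j _ => sq_nonneg ‖w j‖)
      (Finset.mem_univ i))
  calc ‖w‖ ^ 2 ≤ (Real.sqrt (∑ i, ‖w i‖ ^ 2)) ^ 2 := by
        exact pow_le_pow_left₀ (norm_nonneg _) hb 2
    _ = ∑ i, ‖w i‖ ^ 2 := Real.sq_sqrt (Finset.sum_nonneg fun j _ => sq_nonneg _)

theorem integrable_polyGauss {c : W n → ℂ} (hc : Measurable c) {C : ℝ} {d : ℕ}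
    (hb : ∀ w, ‖c w‖ ≤ C * (1 + ‖w‖) ^ d) :
    Integrable (fun w : W n => c w * ∏ i, Complex.exp (-(w i * conj (w i)))) := by
  have hC : 0 ≤ C := by
    have h0 := le_trans (norm_nonneg (c 0)) (hb 0)
    norm_num at h0
    exact h0
  set r : ℝ := 2 * n + 1 with hr
  have hfin : (Module.finrank ℝ (W n) : ℝ) < r := by
    have : Module.finrank ℝ (W n) = 2 * n := by
      simp [Module.finrank_pi_fintype]; ring
    rw [this, hr]; push_cast; linarith
  have hmeas : Measurable fun w : W n => c w * ∏ i, Complex.exp (-(w i * conj (w i))) := by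
    apply hc.mul
    apply Finset.measurable_prod
    intro i _
    have : Measurable fun w : W n => conj (w i) :=
      Complex.continuous_conj.measurable.comp (measurable_pi_apply i)
    exact ((measurable_pi_apply i).mul this).neg.cexp
  refine (((integrable_one_add_norm (μ := (volume : Measure (W n))) hfin).const_mul
      (C * Real.exp (((d : ℝ) + r) ^ 2 / 4))).mono' hmeas.aestronglyMeasurable
      (Eventually.of_forall fun w => ?_))
  rw [norm_mul, norm_gauss]
  have h1 : Real.exp (-(∑ i, Complex.normSq (w i))) ≤ Real.exp (-(‖w‖ ^ 2)) :=
    Real.exp_le_exp.2 (by linarith [sq_norm_le_sum w])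
  calc ‖c w‖ * Real.exp (-(∑ i, Complex.normSq (w i)))
      ≤ (C * (1 + ‖w‖) ^ d) * Real.exp (-(‖w‖ ^ 2)) := by
        apply mul_le_mul (hb w) h1 (Real.exp_pos _).le
          (le_trans (norm_nonneg _) (hb w))
    _ = C * ((1 + ‖w‖) ^ d * Real.exp (-(‖w‖ ^ 2))) := by ring
    _ ≤ C * (Real.exp (((d : ℝ) + r) ^ 2 / 4) * (1 + ‖w‖) ^ (-r)) := by
        apply mul_le_mul_of_nonneg_left (polyGauss_le d r (by positivity) ‖w‖ (norm_nonneg _)) hC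
    _ = C * Real.exp (((d : ℝ) + r) ^ 2 / 4) * (1 + ‖w‖) ^ (-r) := by ring

theorem analyticOnNhd_integral {F : P k → W n → ℂ} (h : Good k n F) :
    AnalyticOnNhd ℂ
      (fun p => ∫ w : W n, F p w * ∏ i, Complex.exp (-(w i * conj (w i)))) Set.univ := by
  obtain ⟨m, A, c, hA, hc, hb, he⟩ := h.decomp
  have key : (fun p => ∫ w : W n, F p w * ∏ i, Complex.exp (-(w i * conj (w i))))
      = fun p => ∑ j, A j p * ∫ w : W n, c j w * ∏ i, Complex.exp (-(w i * conj (w i))) := by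
    funext p
    have h1 : (fun w : W n => F p w * ∏ i, Complex.exp (-(w i * conj (w i))))
        = fun w => ∑ j, A j p * (c j w * ∏ i, Complex.exp (-(w i * conj (w i)))) := by
      funext w
      rw [he p w, Finset.sum_mul]
      exact Finset.sum_congr rfl fun j _ => by ring
    rw [h1, integral_finset_sum]
    · exact Finset.sum_congr rfl fun j _ => integral_const_mul _ _
    · intro j _
      obtain ⟨C, d, hbj⟩ := hb j
      exact (integrable_polyGauss (hc j) hbj).const_mul _
  rw [key]
  exact Finset.analyticOnNhd_fun_sum _ fun j _ => (hA j).mul analyticOnNhd_const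

/-! ### Specific building blocks -/

lemma pad_lt {N k : ℕ} (a : Fin k → ℂ) (w : Fin (N - k) → ℂ) {m : ℕ} (h : m < k) :
    pad N k a w m = a ⟨m, h⟩ := dif_pos h

lemma pad_ge {N k : ℕ} (a : Fin k → ℂ) (w : Fin (N - k) → ℂ) {m : ℕ} (h : ¬ m < k)
    (h2 : m - k < N - k) : pad N k a w m = w ⟨m - k, h2⟩ := by
  rw [pad, dif_neg h, dif_pos h2]

lemma aProj1 (k : ℕ) (i : Fin k) : AnalyticOnNhd ℂ (fun p : P k => p.1 i) Set.univ :=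
  ((ContinuousLinearMap.proj (R := ℂ) (φ := fun _ : Fin k => ℂ) i).comp
    (ContinuousLinearMap.fst ℂ (Fin k → ℂ) (Fin k → ℂ))).analyticOnNhd _

lemma aProj2 (k : ℕ) (i : Fin k) : AnalyticOnNhd ℂ (fun p : P k => p.2 i) Set.univ :=
  ((ContinuousLinearMap.proj (R := ℂ) (φ := fun _ : Fin k => ℂ) i).comp
    (ContinuousLinearMap.snd ℂ (Fin k → ℂ) (Fin k → ℂ))).analyticOnNhd _

lemma good_padL (N k m : ℕ) : Good k (N - k) (fun p w => pad N k p.1 w m) := by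
  by_cases h : m < k
  · have he : (fun (p : P k) (w : W (N - k)) => pad N k p.1 w m) = fun p _ => p.1 ⟨m, h⟩ := by
      funext p w; exact pad_lt _ _ h
    rw [he]; exact Good.base_p _ (aProj1 k ⟨m, h⟩)
  · by_cases h2 : m - k < N - k
    · have he : (fun (p : P k) (w : W (N - k)) => pad N k p.1 w m) = fun _ w => w ⟨m - k, h2⟩ := by
        funext p w; exact pad_ge _ _ h h2
      rw [he]
      refine Good.base_w _ (measurable_pi_apply _) 1 1 (fun w => ?_)
      have := norm_le_pi_norm w ⟨m - k, h2⟩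
      simp only [pow_one, one_mul]
      linarith [norm_nonneg w]
    · have he : (fun (p : P k) (w : W (N - k)) => pad N k p.1 w m) = fun _ _ => 0 := by
        funext p w; rw [pad, dif_neg h, dif_neg h2]
      rw [he]; exact Good.const 0

lemma good_padM (N k m : ℕ) :
    Good k (N - k) (fun p w => pad N k p.2 (fun i => conj (w i)) m) := by
  by_cases h : m < k
  · have he : (fun (p : P k) (w : W (N - k)) => pad N k p.2 (fun i => conj (w i)) m)
        = fun p _ => p.2 ⟨m, h⟩ := by
      funext p w; exact pad_lt _ _ h
    rw [he]; exact Good.base_p _ (aProj2 k ⟨m, h⟩)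
  · by_cases h2 : m - k < N - k
    · have he : (fun (p : P k) (w : W (N - k)) => pad N k p.2 (fun i => conj (w i)) m)
        = fun _ w => conj (w ⟨m - k, h2⟩) := by
        funext p w; exact pad_ge _ _ h h2
      rw [he]
      refine Good.base_w _
        (Complex.continuous_conj.measurable.comp (measurable_pi_apply _)) 1 1 (fun w => ?_)
      have := norm_le_pi_norm w ⟨m - k, h2⟩
      simp only [pow_one, one_mul, RCLike.norm_conj]
      linarith [norm_nonneg w]
    · have he : (fun (p : P k) (w : W (N - k)) => pad N k p.2 (fun i => conj (w i)) m)
        = fun _ _ => 0 := by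
        funext p w; rw [pad, dif_neg h, dif_neg h2]
      rw [he]; exact Good.const 0

lemma good_vdmL (N k : ℕ) (idx : ℕ → ℕ) :
    Good k (N - k) (fun p w => vdm (N - 1) (fun m => pad N k p.1 w (idx m))) := by
  simp only [vdm]
  exact Good.finsetProd _ fun i _ => Good.finsetProd _ fun j _ =>
    (good_padL N k (idx i)).sub (good_padL N k (idx j))

lemma good_vdmM (N k : ℕ) (idx : ℕ → ℕ) :
    Good k (N - k)
      (fun p w => vdm (N - 1) (fun m => pad N k p.2 (fun i => conj (w i)) (idx m))) := by
  simp only [vdm]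
  exact Good.finsetProd _ fun i _ => Good.finsetProd _ fun j _ =>
    (good_padM N k (idx i)).sub (good_padM N k (idx j))

lemma vdm_congr {n : ℕ} {v v' : ℕ → ℂ} (h : ∀ m < n, v m = v' m) : vdm n v = vdm n v' := by
  simp only [vdm]
  refine Finset.prod_congr rfl fun i hi => Finset.prod_congr rfl fun j hj => ?_
  rw [h i (Finset.mem_range.1 hi),
    h j (lt_trans (Finset.mem_range.1 hj) (Finset.mem_range.1 hi))]

lemma split_exp (N k : ℕ) (hk : 2 ≤ k) (hkN : k ≤ N) (lam mu : Fin k → ℂ)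
    (w : Fin (N - k) → ℂ) (a : ℕ) (ha1 : 1 ≤ a) (hak : a ≤ k) :
    ∏ m ∈ Finset.Icc a (N - 1),
        Complex.exp (-(pad N k lam w m * pad N k mu (fun i => conj (w i)) m))
      = (∏ m ∈ Finset.Icc a (k - 1),
          Complex.exp (-(pad N k lam w m * pad N k mu (fun i => conj (w i)) m))) *
        ∏ i, Complex.exp (-(w i * conj (w i))) := by
  have e1 : Finset.Icc a (N - 1) = Finset.Ioc (a - 1) (N - 1) := by
    ext x; simp only [Finset.mem_Icc, Finset.mem_Ioc]; omega
  have e2 : Finset.Icc a (k - 1) = Finset.Ioc (a - 1) (k - 1) := by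
    ext x; simp only [Finset.mem_Icc, Finset.mem_Ioc]; omega
  rw [e1, e2, ← Finset.prod_Ioc_consecutive _ (show a - 1 ≤ k - 1 by omega)
    (show k - 1 ≤ N - 1 by omega)]
  congr 1
  have e3 : Finset.Ioc (k - 1) (N - 1) = Finset.Ico k N := by
    ext x; simp only [Finset.mem_Ioc, Finset.mem_Ico]; omega
  rw [e3, Finset.prod_Ico_eq_prod_range,
    ← Fin.prod_univ_eq_prod_range (fun j => Complex.exp
      (-(pad N k lam w (k + j) * pad N k mu (fun i => conj (w i)) (k + j)))) (N - k)]
  refine Finset.prod_congr rfl fun i _ => ?_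
  have hi := i.isLt
  have h1 : ¬ (k + (i : ℕ) < k) := by omega
  have h2 : k + (i : ℕ) - k < N - k := by omega
  rw [pad_ge lam w h1 h2, pad_ge mu _ h1 h2]
  have he : (⟨k + (i : ℕ) - k, h2⟩ : Fin (N - k)) = i := by
    apply Fin.ext
    simp
  rw [he]

lemma integrand11_eq (N k : ℕ) (hk : 2 ≤ k) (hkN : k ≤ N) (lam mu : Fin k → ℂ)
    (w : Fin (N - k) → ℂ) :
    vdm (N - 1) (fun m => pad N k lam w (m + 1)) *
      vdm (N - 1) (fun m => pad N k mu (fun i => conj (w i)) (m + 1)) *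
      ∏ m ∈ Finset.Icc 1 (N - 1),
        ((1 + (pad N k lam w m - pad N k lam w 0) *
            (pad N k mu (fun i => conj (w i)) m - pad N k mu (fun i => conj (w i)) 0)) *
          Complex.exp (-(pad N k lam w m * pad N k mu (fun i => conj (w i)) m)))
    = (vdm (N - 1) (fun m => pad N k lam w (m + 1)) *
        vdm (N - 1) (fun m => pad N k mu (fun i => conj (w i)) (m + 1)) *
        ((∏ m ∈ Finset.Icc 1 (N - 1),
          (1 + (pad N k lam w m - pad N k lam w 0) *
            (pad N k mu (fun i => conj (w i)) m - pad N k mu (fun i => conj (w i)) 0))) *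
         ∏ m ∈ Finset.Icc 1 (k - 1),
          Complex.exp (-(pad N k lam w m * pad N k mu (fun i => conj (w i)) m)))) *
      ∏ i, Complex.exp (-(w i * conj (w i))) := by
  rw [Finset.prod_mul_distrib, split_exp N k hk hkN lam mu w 1 le_rfl (by omega)]
  ring

lemma integrand12_eq (N k : ℕ) (hk : 2 ≤ k) (hkN : k ≤ N) (lam mu : Fin k → ℂ)
    (w : Fin (N - k) → ℂ) :
    vdm (N - 1) (fun m => pad N k lam w (m + 1)) *
      vdm (N - 1) (fun m => pad N k mu (fun i => conj (w i)) (if m = 0 then 0 else m + 1)) *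
      ∏ m ∈ Finset.Icc 2 (N - 1),
        ((1 + (pad N k lam w m - pad N k lam w 0) *
            (pad N k mu (fun i => conj (w i)) m - pad N k mu (fun i => conj (w i)) 1)) *
          Complex.exp (-(pad N k lam w m * pad N k mu (fun i => conj (w i)) m)))
    = (vdm (N - 1) (fun m => pad N k lam w (m + 1)) *
        vdm (N - 1) (fun m => pad N k mu (fun i => conj (w i)) (if m = 0 then 0 else m + 1)) *
        ((∏ m ∈ Finset.Icc 2 (N - 1),
          (1 + (pad N k lam w m - pad N k lam w 0) *
            (pad N k mu (fun i => conj (w i)) m - pad N k mu (fun i => conj (w i)) 1))) *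
         ∏ m ∈ Finset.Icc 2 (k - 1),
          Complex.exp (-(pad N k lam w m * pad N k mu (fun i => conj (w i)) m)))) *
      ∏ i, Complex.exp (-(w i * conj (w i))) := by
  rw [Finset.prod_mul_distrib, split_exp N k hk hkN lam mu w 2 (by omega) hk]
  ring

end CMAux

end


noncomputable section
namespace CMAux

lemma scalar_id (C E e E1 e2 I x : ℂ) (hne : 1 - x ≠ 0) (hexp : e * (E1 * e2) = E) :
    -(C * E * I) = -(e / (1 - x)) * (C * E1 * ((1 - x) * e2 * I)) := by
  rw [← hexp, div_eq_mul_inv]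
  have hinv : (1 - x) * (1 - x)⁻¹ = 1 := mul_inv_cancel₀ hne
  linear_combination (C * e * E1 * e2 * I) * hinv

lemma part3 (N k : ℕ) (hk : 2 ≤ k) (hkN : k ≤ N) (lam mu mu' : Fin k → ℂ)
    (h0' : 0 < k) (h1' : 1 < k)
    (e0 : mu' ⟨0, h0'⟩ = mu ⟨1, h1'⟩) (e1 : mu' ⟨1, h1'⟩ = mu ⟨0, h0'⟩)
    (e2 : ∀ i : Fin k, 2 ≤ (i : ℕ) → mu' i = mu i)
    (hx : (lam ⟨0, h0'⟩ - lam ⟨1, h1'⟩) * (mu ⟨0, h0'⟩ - mu ⟨1, h1'⟩) ≠ 1) :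
    D12t N k lam mu =
      -(Complex.exp (-((lam ⟨0, h0'⟩ - lam ⟨1, h1'⟩) * (mu ⟨0, h0'⟩ - mu ⟨1, h1'⟩))) /
          (1 - (lam ⟨0, h0'⟩ - lam ⟨1, h1'⟩) * (mu ⟨0, h0'⟩ - mu ⟨1, h1'⟩))) *
        D11t N k lam mu' := by
  have hswap : ∀ (w : Fin (N - k) → ℂ) (j : ℕ), 2 ≤ j →
      pad N k mu' (fun i => conj (w i)) j = pad N k mu (fun i => conj (w i)) j := by
    intro w j hj
    by_cases h : j < k
    · rw [pad_lt _ _ h, pad_lt _ _ h]; exact e2 ⟨j, h⟩ hj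
    · by_cases h2 : j - k < N - k
      · rw [pad_ge _ _ h h2, pad_ge _ _ h h2]
      · simp only [pad, dif_neg h, dif_neg h2]
  have key : ∀ w : Fin (N - k) → ℂ,
      vdm (N - 1) (fun m => pad N k lam w (m + 1)) *
        vdm (N - 1) (fun m => pad N k mu' (fun i => conj (w i)) (m + 1)) *
        ∏ m ∈ Finset.Icc 1 (N - 1),
          ((1 + (pad N k lam w m - pad N k lam w 0) *
              (pad N k mu' (fun i => conj (w i)) m - pad N k mu' (fun i => conj (w i)) 0)) *
            Complex.exp (-(pad N k lam w m * pad N k mu' (fun i => conj (w i)) m)))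
      = ((1 - (lam ⟨0, h0'⟩ - lam ⟨1, h1'⟩) * (mu ⟨0, h0'⟩ - mu ⟨1, h1'⟩)) *
          Complex.exp (-(lam ⟨1, h1'⟩ * mu ⟨0, h0'⟩))) *
        (vdm (N - 1) (fun m => pad N k lam w (m + 1)) *
          vdm (N - 1) (fun m => pad N k mu (fun i => conj (w i)) (if m = 0 then 0 else m + 1)) *
          ∏ m ∈ Finset.Icc 2 (N - 1),
            ((1 + (pad N k lam w m - pad N k lam w 0) *
                (pad N k mu (fun i => conj (w i)) m - pad N k mu (fun i => conj (w i)) 1)) *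
              Complex.exp (-(pad N k lam w m * pad N k mu (fun i => conj (w i)) m)))) := by
    intro w
    have hvdm : vdm (N - 1) (fun m => pad N k mu' (fun i => conj (w i)) (m + 1))
        = vdm (N - 1)
            (fun m => pad N k mu (fun i => conj (w i)) (if m = 0 then 0 else m + 1)) := by
      apply vdm_congr
      intro m hm
      by_cases hm0 : m = 0
      · subst hm0
        norm_num
        rw [pad_lt _ _ h1', pad_lt _ _ h0', e1]
      · rw [if_neg hm0]
        exact hswap w (m + 1) (by omega)
    have hsplit : (∏ m ∈ Finset.Icc 1 (N - 1),
          ((1 + (pad N k lam w m - pad N k lam w 0) *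
              (pad N k mu' (fun i => conj (w i)) m - pad N k mu' (fun i => conj (w i)) 0)) *
            Complex.exp (-(pad N k lam w m * pad N k mu' (fun i => conj (w i)) m))))
        = ((1 + (pad N k lam w 1 - pad N k lam w 0) *
              (pad N k mu' (fun i => conj (w i)) 1 - pad N k mu' (fun i => conj (w i)) 0)) *
            Complex.exp (-(pad N k lam w 1 * pad N k mu' (fun i => conj (w i)) 1))) *
          ∏ m ∈ Finset.Icc 2 (N - 1),
            ((1 + (pad N k lam w m - pad N k lam w 0) *
                (pad N k mu' (fun i => conj (w i)) m - pad N k mu' (fun i => conj (w i)) 0)) *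
              Complex.exp (-(pad N k lam w m * pad N k mu' (fun i => conj (w i)) m))) := by
      rw [← Finset.mul_prod_erase _ _ (show (1 : ℕ) ∈ Finset.Icc 1 (N - 1) by
        simp only [Finset.mem_Icc]; omega)]
      congr 1
      have he : (Finset.Icc 1 (N - 1)).erase 1 = Finset.Icc 2 (N - 1) := by
        rw [Finset.Icc_erase_left]
        ext x; simp only [Finset.mem_Ioc, Finset.mem_Icc]; omega
      rw [he]
    have htail : ∀ m ∈ Finset.Icc 2 (N - 1),
        ((1 + (pad N k lam w m - pad N k lam w 0) *
            (pad N k mu' (fun i => conj (w i)) m - pad N k mu' (fun i => conj (w i)) 0)) *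
          Complex.exp (-(pad N k lam w m * pad N k mu' (fun i => conj (w i)) m)))
        = ((1 + (pad N k lam w m - pad N k lam w 0) *
            (pad N k mu (fun i => conj (w i)) m - pad N k mu (fun i => conj (w i)) 1)) *
          Complex.exp (-(pad N k lam w m * pad N k mu (fun i => conj (w i)) m))) := by
      intro m hm
      obtain ⟨hm2, _⟩ := Finset.mem_Icc.1 hm
      rw [hswap w m hm2, pad_lt mu' (fun i => conj (w i)) h0', e0,
        pad_lt mu (fun i => conj (w i)) h1']
    rw [hvdm, hsplit, Finset.prod_congr rfl htail,
      pad_lt lam w h1', pad_lt lam w h0', pad_lt mu' (fun i => conj (w i)) h1',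
      pad_lt mu' (fun i => conj (w i)) h0', e0, e1]
    ring
  unfold D12t D11t
  simp only [key]
  rw [integral_const_mul]
  rw [pad_lt lam (fun _ => 0) h0', pad_lt lam (fun _ => 0) h1',
    pad_lt mu (fun _ => 0) h0', pad_lt mu (fun _ => 0) h1',
    pad_lt mu' (fun _ => 0) h0', e0]
  have hne : (1 : ℂ) - (lam ⟨0, h0'⟩ - lam ⟨1, h1'⟩) * (mu ⟨0, h0'⟩ - mu ⟨1, h1'⟩) ≠ 0 :=
    sub_ne_zero.2 (Ne.symm hx)
  have hexp : Complex.exp (-((lam ⟨0, h0'⟩ - lam ⟨1, h1'⟩) * (mu ⟨0, h0'⟩ - mu ⟨1, h1'⟩))) *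
      (Complex.exp (-(lam ⟨0, h0'⟩ * mu ⟨1, h1'⟩)) *
        Complex.exp (-(lam ⟨1, h1'⟩ * mu ⟨0, h0'⟩)))
      = Complex.exp (-(lam ⟨0, h0'⟩ * mu ⟨0, h0'⟩ + lam ⟨1, h1'⟩ * mu ⟨1, h1'⟩)) := by
    rw [← Complex.exp_add, ← Complex.exp_add]; congr 1; ring
  exact scalar_id _ _ _ _ _ _ _ hne hexp

end CMAux
end

/-- analyticity of the Chalker–Mehlig integral representations and the
exact relation between diagonal and off-diagonal conditional overlaps. -/
theorem statement0 (N k : ℕ) (hk : 2 ≤ k) (hkN : k ≤ N) :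
    AnalyticOn ℂ (fun p : (Fin k → ℂ) × (Fin k → ℂ) => D11t N k p.1 p.2) Set.univ ∧
    AnalyticOn ℂ (fun p : (Fin k → ℂ) × (Fin k → ℂ) => D12t N k p.1 p.2) Set.univ ∧
    ∀ lam mu : Fin k → ℂ,
      (lam ⟨0, by omega⟩ - lam ⟨1, by omega⟩) * (mu ⟨0, by omega⟩ - mu ⟨1, by omega⟩) ≠ 1 →
      D12t N k lam mu =
        -(Complex.exp (-((lam ⟨0, by omega⟩ - lam ⟨1, by omega⟩) *
              (mu ⟨0, by omega⟩ - mu ⟨1, by omega⟩))) /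
            (1 - (lam ⟨0, by omega⟩ - lam ⟨1, by omega⟩) *
              (mu ⟨0, by omega⟩ - mu ⟨1, by omega⟩))) *
          D11t N k lam
            (fun i => if i.val = 0 then mu ⟨1, by omega⟩
              else if i.val = 1 then mu ⟨0, by omega⟩ else mu i) := by
  classical
  have h0' : 0 < k := by omega
  have h1' : 1 < k := by omega
  refine ⟨?_, ?_, ?_⟩
  · -- analyticity of D11t
    rw [analyticOn_univ]
    have hGood : CMAux.Good k (N - k) (fun (p : CMAux.P k) (w : CMAux.W (N - k)) =>
        vdm (N - 1) (fun m => pad N k p.1 w (m + 1)) *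
          vdm (N - 1) (fun m => pad N k p.2 (fun i => conj (w i)) (m + 1)) *
          ((∏ m ∈ Finset.Icc 1 (N - 1),
            (1 + (pad N k p.1 w m - pad N k p.1 w 0) *
              (pad N k p.2 (fun i => conj (w i)) m - pad N k p.2 (fun i => conj (w i)) 0))) *
           ∏ m ∈ Finset.Icc 1 (k - 1),
            Complex.exp (-(pad N k p.1 w m * pad N k p.2 (fun i => conj (w i)) m)))) := by
      refine ((CMAux.good_vdmL N k _).mul (CMAux.good_vdmM N k _)).mul (CMAux.Good.mul ?_ ?_)
      · exact CMAux.Good.finsetProd _ fun m _ => (CMAux.Good.const 1).add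
          (((CMAux.good_padL N k m).sub (CMAux.good_padL N k 0)).mul
            ((CMAux.good_padM N k m).sub (CMAux.good_padM N k 0)))
      · refine CMAux.Good.finsetProd _ fun m hm => ?_
        have hmk : m < k := by have := Finset.mem_Icc.1 hm; omega
        have he : (fun (p : CMAux.P k) (w : CMAux.W (N - k)) =>
            Complex.exp (-(pad N k p.1 w m * pad N k p.2 (fun i => conj (w i)) m)))
            = fun (p : CMAux.P k) (_ : CMAux.W (N - k)) =>
              Complex.exp (-(p.1 ⟨m, hmk⟩ * p.2 ⟨m, hmk⟩)) := by
          funext p w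
          rw [CMAux.pad_lt _ _ hmk, CMAux.pad_lt _ _ hmk]
        rw [he]
        exact CMAux.Good.base_p _
          (((CMAux.aProj1 k ⟨m, hmk⟩).mul (CMAux.aProj2 k ⟨m, hmk⟩)).neg.cexp)
    have main : (fun p : (Fin k → ℂ) × (Fin k → ℂ) => D11t N k p.1 p.2)
        = fun p : (Fin k → ℂ) × (Fin k → ℂ) =>
          ((Nat.factorial N : ℂ) / (Nat.factorial (N - k) : ℂ) / Zconst N) *
            Complex.exp (-(p.1 ⟨0, h0'⟩ * p.2 ⟨0, h0'⟩)) *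
            ∫ w : Fin (N - k) → ℂ,
              (vdm (N - 1) (fun m => pad N k p.1 w (m + 1)) *
                vdm (N - 1) (fun m => pad N k p.2 (fun i => conj (w i)) (m + 1)) *
                ((∏ m ∈ Finset.Icc 1 (N - 1),
                  (1 + (pad N k p.1 w m - pad N k p.1 w 0) *
                    (pad N k p.2 (fun i => conj (w i)) m -
                      pad N k p.2 (fun i => conj (w i)) 0))) *
                 ∏ m ∈ Finset.Icc 1 (k - 1),
                  Complex.exp (-(pad N k p.1 w m * pad N k p.2 (fun i => conj (w i)) m)))) *
              ∏ i, Complex.exp (-(w i * conj (w i))) := by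
      funext p
      unfold D11t
      rw [CMAux.pad_lt p.1 _ h0', CMAux.pad_lt p.2 _ h0']
      simp only [CMAux.integrand11_eq N k hk hkN p.1 p.2]
    rw [main]
    exact (analyticOnNhd_const.mul
        (((CMAux.aProj1 k ⟨0, h0'⟩).mul (CMAux.aProj2 k ⟨0, h0'⟩)).neg.cexp)).mul
      (CMAux.analyticOnNhd_integral hGood)
  · -- analyticity of D12t
    rw [analyticOn_univ]
    have hGood : CMAux.Good k (N - k) (fun (p : CMAux.P k) (w : CMAux.W (N - k)) =>
        vdm (N - 1) (fun m => pad N k p.1 w (m + 1)) *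
          vdm (N - 1)
            (fun m => pad N k p.2 (fun i => conj (w i)) (if m = 0 then 0 else m + 1)) *
          ((∏ m ∈ Finset.Icc 2 (N - 1),
            (1 + (pad N k p.1 w m - pad N k p.1 w 0) *
              (pad N k p.2 (fun i => conj (w i)) m - pad N k p.2 (fun i => conj (w i)) 1))) *
           ∏ m ∈ Finset.Icc 2 (k - 1),
            Complex.exp (-(pad N k p.1 w m * pad N k p.2 (fun i => conj (w i)) m)))) := by
      refine ((CMAux.good_vdmL N k _).mul (CMAux.good_vdmM N k _)).mul (CMAux.Good.mul ?_ ?_)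
      · exact CMAux.Good.finsetProd _ fun m _ => (CMAux.Good.const 1).add
          (((CMAux.good_padL N k m).sub (CMAux.good_padL N k 0)).mul
            ((CMAux.good_padM N k m).sub (CMAux.good_padM N k 1)))
      · refine CMAux.Good.finsetProd _ fun m hm => ?_
        have hmk : m < k := by have := Finset.mem_Icc.1 hm; omega
        have he : (fun (p : CMAux.P k) (w : CMAux.W (N - k)) =>
            Complex.exp (-(pad N k p.1 w m * pad N k p.2 (fun i => conj (w i)) m)))
            = fun (p : CMAux.P k) (_ : CMAux.W (N - k)) =>
              Complex.exp (-(p.1 ⟨m, hmk⟩ * p.2 ⟨m, hmk⟩)) := by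
          funext p w
          rw [CMAux.pad_lt _ _ hmk, CMAux.pad_lt _ _ hmk]
        rw [he]
        exact CMAux.Good.base_p _
          (((CMAux.aProj1 k ⟨m, hmk⟩).mul (CMAux.aProj2 k ⟨m, hmk⟩)).neg.cexp)
    have main : (fun p : (Fin k → ℂ) × (Fin k → ℂ) => D12t N k p.1 p.2)
        = fun p : (Fin k → ℂ) × (Fin k → ℂ) =>
          -(((Nat.factorial N : ℂ) / (Nat.factorial (N - k) : ℂ) / Zconst N) *
            Complex.exp (-(p.1 ⟨0, h0'⟩ * p.2 ⟨0, h0'⟩ + p.1 ⟨1, h1'⟩ * p.2 ⟨1, h1'⟩)) *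
            ∫ w : Fin (N - k) → ℂ,
              (vdm (N - 1) (fun m => pad N k p.1 w (m + 1)) *
                vdm (N - 1)
                  (fun m => pad N k p.2 (fun i => conj (w i)) (if m = 0 then 0 else m + 1)) *
                ((∏ m ∈ Finset.Icc 2 (N - 1),
                  (1 + (pad N k p.1 w m - pad N k p.1 w 0) *
                    (pad N k p.2 (fun i => conj (w i)) m -
                      pad N k p.2 (fun i => conj (w i)) 1))) *
                 ∏ m ∈ Finset.Icc 2 (k - 1),
                  Complex.exp (-(pad N k p.1 w m * pad N k p.2 (fun i => conj (w i)) m)))) *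
              ∏ i, Complex.exp (-(w i * conj (w i)))) := by
      funext p
      unfold D12t
      rw [CMAux.pad_lt p.1 (fun _ => 0) h0', CMAux.pad_lt p.2 (fun _ => 0) h0',
        CMAux.pad_lt p.1 (fun _ => 0) h1', CMAux.pad_lt p.2 (fun _ => 0) h1']
      simp only [CMAux.integrand12_eq N k hk hkN p.1 p.2]
    rw [main]
    exact ((analyticOnNhd_const.mul
        ((((CMAux.aProj1 k ⟨0, h0'⟩).mul (CMAux.aProj2 k ⟨0, h0'⟩)).add
          ((CMAux.aProj1 k ⟨1, h1'⟩).mul (CMAux.aProj2 k ⟨1, h1'⟩))).neg.cexp)).mul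
      (CMAux.analyticOnNhd_integral hGood)).neg
  · -- the exact relation
    intro lam mu hx
    refine CMAux.part3 N k hk hkN lam mu _ h0' h1' ?_ ?_ ?_ hx
    · simp
    · simp
    · intro i hi
      have hi0 : ¬((i : ℕ) = 0) := by omega
      have hi1 : ¬((i : ℕ) = 1) := by omega
      simp [hi0, hi1]
end

section
/- Let k ≥ 1 and let λ = (λ₁,…,λ_k) ∈ ℂ^k satisfy λ_i ≠ λ₁ for 2 ≤ i ≤ k. Then for all sufficiently negative real R the quantities D₁₁^{edge,k}(R+λ₁,…,R+λ_k) and D₁₁^{edge,1}(R+λ₁) are defined with D₁₁^{edge,1}(R+λ₁) ≠ 0, and lim_{R→−∞, R∈ℝ} D₁₁^{edge,k}(R+λ₁,…,R+λ_k) / D₁₁^{edge,1}(R+λ₁) = D₁₁^{bulk,k}(λ₁,…,λ_k) / D₁₁^{bulk,1}(λ₁) = π · D₁₁^{bulk,k}(λ₁,…,λ_k). -/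
open ComplexConjugate Filter MeasureTheory Topology

/-!
Deep in the bulk, i.e. for `a = 2R + λ₁ + λ̄₁ → -∞`, the function `F` tends to `1` while its
derivative `-φ` (the Gaussian density) tends to `0`. Hence the prefactor
`e^{-a²/2} - √(2π)·a·F(a)` of `D₁₁^{edge}` behaves like `-√(2π)·a` (so it is eventually nonzero),
and, since `e^{a²/2}` times this prefactor is the denominator of `H`, one gets
`H(a, b, c, d, f) → e^{-f} - 1 + f` when `a, b, c, d` are shifted by the same `R → -∞`.
The entries of the shifted edge kernel matrix carry the factor `e^{(R + λ̄₁)(λ_j - λ_i)}`;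
conjugating by the diagonal matrix `diag(e^{(R + λ̄₁)λ_i})`, which does not change the
determinant, removes it, and the conjugated entries converge to those of the bulk kernel.
Finally both `D₁₁^{edge,k}` and `D₁₁^{bulk,k}` factor as their `k = 1` value times the kernel
determinant, so the ratio is exactly that determinant.
-/

open Set

local notation "√2π" => ((Real.sqrt (2 * Real.pi) : ℝ) : ℂ)

lemma tendsto_ofReal_add_atBot_cobounded (A : ℂ) :
    Tendsto (fun s : ℝ => (s : ℂ) + A) atBot (Bornology.cobounded ℂ) :=
  (tendsto_add_const_cobounded A).comp (RCLike.tendsto_ofReal_atBot_cobounded ℂ)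

noncomputable def gaussPdf (z : ℂ) : ℂ := Complex.exp (-(z ^ 2) / 2) / √2π

lemma sqrtTwoPi_ne_zero : √2π ≠ 0 := by
  rw [Ne, Complex.ofReal_eq_zero]; positivity

lemma norm_gaussPdf (z : ℂ) :
    ‖gaussPdf z‖ = Real.exp ((z.im ^ 2 - z.re ^ 2) / 2) / Real.sqrt (2 * Real.pi) := by
  rw [gaussPdf, norm_div, Complex.norm_exp, Complex.norm_real, Real.norm_of_nonneg (by positivity)]
  congr 2
  simp [sq]

lemma hasDerivAt_gaussPdf (z : ℂ) : HasDerivAt gaussPdf (-z * gaussPdf z) z := by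
  have h : HasDerivAt (fun x : ℂ => -(x ^ 2) / 2) (-z) z :=
    ((hasDerivAt_pow 2 z).neg.div_const 2).congr_deriv (by norm_num; ring)
  exact (h.cexp.div_const √2π).congr_deriv (by rw [gaussPdf]; ring)

lemma tendsto_gaussPdf_add_cocompact (z : ℂ) :
    Tendsto (fun t : ℝ => gaussPdf (z + t)) (cocompact ℝ) (𝓝 0) := by
  rw [tendsto_zero_iff_norm_tendsto_zero]
  simp only [norm_gaussPdf, Complex.add_re, Complex.add_im, Complex.ofReal_re,
    Complex.ofReal_im, add_zero]
  have hsq : Tendsto (fun t : ℝ => (z.re + t) ^ 2) (cocompact ℝ) atTop := by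
    have := tendsto_norm_cocompact_atTop.comp (Homeomorph.addLeft z.re).map_cocompact.le
    simpa [Function.comp_def, Real.norm_eq_abs, sq_abs] using
      (tendsto_pow_atTop two_ne_zero).comp this
  refine (Real.tendsto_exp_atBot.comp ?_).div_const _ |>.trans (by simp)
  exact (tendsto_atBot_add_const_left _ _ (tendsto_neg_atTop_atBot.comp hsq)).atBot_div_const
    two_pos

lemma tendsto_gaussPdf_add_atBot (Z : ℂ) :
    Tendsto (fun s : ℝ => gaussPdf (s + Z)) atBot (𝓝 0) :=
  ((tendsto_gaussPdf_add_cocompact Z).mono_left atBot_le_cocompact).congr fun s => by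
    rw [add_comm]

lemma gaussPdf_add_eq_cexp_quadratic (z : ℂ) (t : ℝ) :
    gaussPdf (z + t) = Complex.exp (-(1 / 2) * t ^ 2 + -z * t + -(z ^ 2) / 2) / √2π := by
  rw [gaussPdf]; ring_nf

lemma integrable_gaussPdf_add (z : ℂ) : Integrable (fun t : ℝ => gaussPdf (z + t)) := by
  simp_rw [gaussPdf_add_eq_cexp_quadratic]
  exact (integrable_cexp_quadratic' (by norm_num) _ _).div_const _

lemma integral_gaussPdf_add (z : ℂ) : ∫ t : ℝ, gaussPdf (z + t) = 1 := by
  have hsqrt : ((Real.pi : ℂ) / -(-(1 / 2))) ^ (1 / 2 : ℂ) = √2π := by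
    rw [show ((Real.pi : ℂ) / -(-(1 / 2))) = ((2 * Real.pi : ℝ) : ℂ) by push_cast; ring,
      show (1 / 2 : ℂ) = ((1 / 2 : ℝ) : ℂ) by norm_num, ← Complex.ofReal_cpow (by positivity),
      Real.sqrt_eq_rpow]
  simp_rw [gaussPdf_add_eq_cexp_quadratic, integral_div,
    integral_cexp_quadratic (by norm_num : (-(1 / 2) : ℂ).re < 0), hsqrt]
  rw [show -z ^ 2 / 2 - (-z) ^ 2 / (4 * -(1 / 2)) = 0 by ring, Complex.exp_zero, mul_one,
    div_self sqrtTwoPi_ne_zero]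

lemma hasDerivAt_gaussPdf_const_add (z : ℂ) (t : ℝ) :
    HasDerivAt (fun s : ℝ => gaussPdf (z + s)) (-(z + t) * gaussPdf (z + t)) t :=
  ((hasDerivAt_gaussPdf (z + t)).comp_const_add z t).comp_ofReal

lemma Ferf_eq_integral (z : ℂ) : Ferf z = ∫ t in Ioi (0 : ℝ), gaussPdf (z + t) := by
  simp_rw [Ferf, gaussPdf, integral_div, one_div_mul_eq_div]

lemma Ferf_eq_one_sub (z : ℂ) : Ferf z = 1 - ∫ t in Iic (0 : ℝ), gaussPdf (z + t) := by
  rw [Ferf_eq_integral, ← integral_gaussPdf_add z, ← intervalIntegral.integral_Iic_add_Ioi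
    (integrable_gaussPdf_add z).integrableOn (integrable_gaussPdf_add z).integrableOn]
  ring

lemma norm_neg_mul_gaussPdf_le {x z : ℂ} (hx : ‖x - z‖ < 1) (t : ℝ) :
    ‖-(x + t) * gaussPdf (x + t)‖ ≤
      (‖z‖ + 1 + |t|) * Real.exp ((‖z‖ + 1) ^ 2 - t ^ 2 / 4) / Real.sqrt (2 * Real.pi) := by
  have hx' : ‖x‖ ≤ ‖z‖ + 1 := by linarith [norm_le_norm_add_norm_sub' x z]
  have hre := (Complex.abs_re_le_norm x).trans hx'
  have him := (Complex.abs_im_le_norm x).trans hx'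
  rw [norm_mul, norm_neg, norm_gaussPdf, mul_div_assoc]
  gcongr
  · calc ‖x + t‖ ≤ ‖x‖ + ‖(t : ℂ)‖ := norm_add_le _ _
      _ ≤ ‖z‖ + 1 + |t| := by rw [Complex.norm_real, Real.norm_eq_abs]; linarith
  · simp only [Complex.add_re, Complex.add_im, Complex.ofReal_re, Complex.ofReal_im, add_zero]
    nlinarith [sq_abs x.re, sq_abs x.im, abs_nonneg x.re, abs_nonneg x.im,
      sq_nonneg (2 * x.re + t)]

lemma hasDerivAt_Ferf (z : ℂ) : HasDerivAt Ferf (-gaussPdf z) z := by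
  set r := ‖z‖ + 1
  have hbound : Integrable fun t : ℝ =>
      (r + |t|) * Real.exp (r ^ 2 - t ^ 2 / 4) / Real.sqrt (2 * Real.pi) := by
    have h1 := integrable_exp_neg_mul_sq (b := 1 / 4) (by norm_num)
    have h2 := (integrable_mul_exp_neg_mul_sq (b := 1 / 4) (by norm_num)).norm
    refine (((h1.const_mul r).add h2).const_mul (Real.exp (r ^ 2))).div_const
      (Real.sqrt (2 * Real.pi)) |>.congr (Eventually.of_forall fun t => ?_)
    simp only [Pi.add_apply, norm_mul, Real.norm_eq_abs, abs_of_pos (Real.exp_pos _)]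
    rw [show r ^ 2 - t ^ 2 / 4 = r ^ 2 + -(1 / 4) * t ^ 2 by ring, Real.exp_add]
    ring
  obtain ⟨hint, hderiv⟩ := hasDerivAt_integral_of_dominated_loc_of_deriv_le
    (μ := volume.restrict (Ioi 0)) (F := fun x (t : ℝ) => gaussPdf (x + t))
    (F' := fun x t => -(x + t) * gaussPdf (x + t)) (Metric.ball_mem_nhds z one_pos)
    (Eventually.of_forall fun x => (integrable_gaussPdf_add x).aestronglyMeasurable.restrict)
    (integrable_gaussPdf_add z).restrict
    (Continuous.aestronglyMeasurable (by unfold gaussPdf; fun_prop))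
    (ae_of_all _ fun t x hx => norm_neg_mul_gaussPdf_le (mem_ball_iff_norm.1 hx) t)
    hbound.restrict
    (ae_of_all _ fun t x _ => (hasDerivAt_gaussPdf (x + t)).comp_add_const x t)
  have hFTC : ∫ t in Ioi (0 : ℝ), -(z + t) * gaussPdf (z + t) = -gaussPdf z := by
    simpa using integral_Ioi_of_hasDerivAt_of_tendsto'
      (fun t _ => hasDerivAt_gaussPdf_const_add z t) hint
      ((tendsto_gaussPdf_add_cocompact z).mono_left atTop_le_cocompact)
  rw [funext Ferf_eq_integral, ← hFTC]
  exact hderiv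

lemma tendsto_Ferf_add_atBot (Z : ℂ) : Tendsto (fun s : ℝ => Ferf (s + Z)) atBot (𝓝 1) := by
  have hbound : ∀ᶠ s : ℝ in atBot, ∀ᵐ t : ℝ ∂volume.restrict (Iic 0),
      ‖gaussPdf (s + Z + t)‖ ≤
        Real.exp (Z.im ^ 2 / 2) * Real.exp (-(1 / 2) * t ^ 2) / Real.sqrt (2 * Real.pi) := by
    filter_upwards [eventually_le_atBot (-Z.re)] with s hs
    refine (ae_restrict_iff' measurableSet_Iic).2 (ae_of_all _ fun t (ht : t ≤ 0) => ?_)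
    rw [norm_gaussPdf, ← Real.exp_add]
    gcongr
    simp only [Complex.add_re, Complex.add_im, Complex.ofReal_re, Complex.ofReal_im, add_zero,
      zero_add]
    nlinarith [mul_nonneg (by linarith : 0 ≤ -(s + Z.re)) (by linarith : 0 ≤ -(s + Z.re + 2 * t))]
  have hlim : Tendsto (fun s : ℝ => ∫ t in Iic (0 : ℝ), gaussPdf (s + Z + t)) atBot (𝓝 0) := by
    simpa using tendsto_integral_filter_of_dominated_convergence _
      (Eventually.of_forall fun s => (integrable_gaussPdf_add _).aestronglyMeasurable.restrict)
      hbound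
      (((integrable_exp_neg_mul_sq (by norm_num)).const_mul _).div_const _).restrict
      (ae_of_all _ fun t => (tendsto_gaussPdf_add_atBot (Z + t)).congr fun s => by
        rw [add_assoc])
  simpa [Ferf_eq_one_sub] using hlim.const_sub 1

noncomputable def edgeWeight (a : ℂ) : ℂ := Complex.exp (-(a ^ 2 / 2)) - √2π * a * Ferf a

lemma edgeWeight_eq (a : ℂ) : edgeWeight a = √2π * (gaussPdf a - a * Ferf a) := by
  rw [edgeWeight, gaussPdf, mul_sub, mul_div_cancel₀ _ sqrtTwoPi_ne_zero, neg_div]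
  ring

lemma tendsto_edgeWeight_div_atBot (A : ℂ) :
    Tendsto (fun s : ℝ => edgeWeight (s + A) / (s + A)) atBot (𝓝 (-√2π)) := by
  have hA := tendsto_ofReal_add_atBot_cobounded A
  have h := (((tendsto_gaussPdf_add_atBot A).mul (tendsto_inv₀_cobounded.comp hA)).sub
    (tendsto_Ferf_add_atBot A)).const_mul √2π
  rw [zero_mul, zero_sub, mul_neg_one] at h
  refine h.congr' ?_
  filter_upwards [hA.eventually_ne_cobounded 0] with s hs
  rw [edgeWeight_eq, Function.comp_apply]
  field_simp

lemma eventually_edgeWeight_ne_zero_atBot (A : ℂ) :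
    ∀ᶠ s : ℝ in atBot, edgeWeight (s + A) ≠ 0 :=
  ((tendsto_edgeWeight_div_atBot A).eventually_ne (neg_ne_zero.2 sqrtTwoPi_ne_zero)).mono
    fun s hs h => hs (by rw [h, zero_div])

lemma hasDerivAt_Ferf_const_add (w : ℂ) : HasDerivAt (fun x => Ferf (w + x)) (-gaussPdf w) 0 := by
  simpa using (hasDerivAt_Ferf (w + 0)).comp_const_add w 0

lemma Hedge_eq (a b c d f : ℂ) :
    Hedge a b c d f = -√2π *
      (a * (Complex.exp (-f) * Ferf b * Ferf c - Ferf d * Ferf a + f * Ferf d * Ferf a) -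
        (Complex.exp (-f) * (gaussPdf b * Ferf c + Ferf b * gaussPdf c) -
          (gaussPdf d * Ferf a + Ferf d * gaussPdf a) + f * Ferf d * gaussPdf a)) /
      edgeWeight a := by
  have hE : HasDerivAt (fun x : ℂ => Complex.exp ((a + x) ^ 2 / 2))
      (Complex.exp (a ^ 2 / 2) * a) 0 := by
    have h := (((hasDerivAt_id (0 : ℂ)).const_add a).pow 2).div_const 2
    simpa using h.cexp
  have hG := ((((hasDerivAt_Ferf_const_add b).const_mul (Complex.exp (-f))).fun_mul
    (hasDerivAt_Ferf_const_add c)).fun_sub ((hasDerivAt_Ferf_const_add d).fun_mul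
    (hasDerivAt_Ferf_const_add a))).fun_add ((hasDerivAt_Ferf_const_add a).const_mul (f * Ferf d))
  have hden : 1 - √2π * a * Complex.exp (a ^ 2 / 2) * Ferf a =
      Complex.exp (a ^ 2 / 2) * edgeWeight a := by
    rw [edgeWeight, mul_sub, ← Complex.exp_add, add_neg_cancel, Complex.exp_zero]
    ring
  rw [Hedge, (hE.fun_mul hG).deriv, hden]
  by_cases hW : edgeWeight a = 0
  · simp [hW]
  · field_simp
    simp only [add_zero]
    ring

lemma tendsto_Hedge_atBot (A B C D f : ℂ) :
    Tendsto (fun s : ℝ => Hedge (s + A) (s + B) (s + C) (s + D) f) atBot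
      (𝓝 (Complex.exp (-f) - 1 + f)) := by
  have hF := tendsto_Ferf_add_atBot
  have hφ := tendsto_gaussPdf_add_atBot
  have hA := tendsto_ofReal_add_atBot_cobounded A
  have hS := (((tendsto_const_nhds (x := Complex.exp (-f))).mul (hF B)).mul (hF C)).sub
    ((hF D).mul (hF A)) |>.add (((tendsto_const_nhds (x := f)).mul (hF D)).mul (hF A))
  have hT := ((tendsto_const_nhds (x := Complex.exp (-f))).mul
    (((hφ B).mul (hF C)).add ((hF B).mul (hφ C)))).sub
    (((hφ D).mul (hF A)).add ((hF D).mul (hφ A))) |>.add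
    (((tendsto_const_nhds (x := f)).mul (hF D)).mul (hφ A))
  have h := ((hS.sub (hT.mul (tendsto_inv₀_cobounded.comp hA))).const_mul (-√2π)).div
    (tendsto_edgeWeight_div_atBot A) (neg_ne_zero.2 sqrtTwoPi_ne_zero)
  rw [mul_div_cancel_left₀ _ (neg_ne_zero.2 sqrtTwoPi_ne_zero)] at h
  simp only [mul_one, mul_zero, zero_add, sub_zero] at h
  refine h.congr' ?_
  filter_upwards [hA.eventually_ne_cobounded 0] with s hs
  rw [Hedge_eq, Pi.div_apply, Function.comp_apply, div_div_eq_mul_div]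
  congr 1
  field_simp

lemma K11bulk_eq (x xb y yb l lb : ℂ) :
    K11bulk x xb y yb l lb =
      1 / Real.pi * (1 + (x - l) * (xb - lb)) * Complex.exp ((xb - lb) * (y - x)) *
        (Complex.exp (-((xb - lb) * (y - l))) - 1 + (xb - lb) * (y - l)) /
          ((xb - lb) * (y - l)) ^ 2 := by
  have hsplit : Complex.exp ((xb - lb) * (y - x)) = Complex.exp (-((x - l) * (xb - lb))) *
      Complex.exp ((xb - lb) * (y - l)) := by
    rw [← Complex.exp_add]; ring_nf
  set w := (xb - lb) * (y - l)
  have hinv : Complex.exp w * Complex.exp (-w) = 1 := by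
    rw [← Complex.exp_add, add_neg_cancel, Complex.exp_zero]
  rw [K11bulk, omegaBulk, kapBulk, hsplit]
  linear_combination (-(1 / Real.pi * (1 + (x - l) * (xb - lb)) *
    Complex.exp (-((x - l) * (xb - lb))) / w ^ 2)) * hinv

lemma tendsto_K11edge_gauge_atBot (x xb y yb l lb : ℂ) :
    Tendsto (fun R : ℝ => Complex.exp ((R + lb) * x) *
        K11edge (R + x) (R + xb) (R + y) (R + yb) (R + l) (R + lb) / Complex.exp ((R + lb) * y))
      atBot (𝓝 (K11bulk x xb y yb l lb)) := by
  set w := (xb - lb) * (y - l)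
  have hshift : ∀ R : ℝ, Complex.exp ((R + lb) * x) *
      K11edge (R + x) (R + xb) (R + y) (R + yb) (R + l) (R + lb) / Complex.exp ((R + lb) * y) =
      1 / Real.pi * (1 + (x - l) * (xb - lb)) * Complex.exp ((xb - lb) * (y - x)) *
        Hedge (↑(2 * R) + (l + lb)) (↑(2 * R) + (l + xb)) (↑(2 * R) + (y + lb))
          (↑(2 * R) + (y + xb)) w / w ^ 2 := by
    intro R
    have hsum : ∀ u v : ℂ, (R : ℂ) + u + (R + v) = ↑(2 * R) + (u + v) := fun u v => by
      push_cast; ring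
    have hexp : Complex.exp ((R + lb) * x) * Complex.exp (-((R + x) * (R + xb))) *
        Complex.exp ((R + xb) * (R + y)) / Complex.exp ((R + lb) * y) =
        Complex.exp ((xb - lb) * (y - x)) := by
      rw [← Complex.exp_add, ← Complex.exp_add, ← Complex.exp_sub]; ring_nf
    simp only [K11edge, omegaEdge, kapEdge, hsum, add_sub_add_left_eq_sub]
    rw [show (l - y) * (lb - xb) = w by ring, show (l - y) ^ 2 * (lb - xb) ^ 2 = w ^ 2 by ring]
    linear_combination (1 / Real.pi * (1 + (x - l) * (xb - lb)) *
      Hedge (↑(2 * R) + (l + lb)) (↑(2 * R) + (l + xb)) (↑(2 * R) + (y + lb))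
        (↑(2 * R) + (y + xb)) w / w ^ 2) * hexp
  have hH := (tendsto_Hedge_atBot (l + lb) (l + xb) (y + lb) (y + xb) w).comp
    (tendsto_id.const_mul_atBot two_pos)
  rw [K11bulk_eq]
  exact ((tendsto_const_nhds.mul hH).div_const _).congr fun R => (hshift R).symm

lemma Matrix.det_of_mul_div {n K : Type*} [Fintype n] [DecidableEq n] [Field K] (c : n → K)
    (hc : ∀ i, c i ≠ 0) (A : Matrix n n K) :
    (Matrix.of fun i j => c i * A i j / c j).det = A.det := by
  have hrows : (Matrix.of fun i j => c i * A i j / c j) =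
      Matrix.of fun i j => (c j)⁻¹ * Matrix.of (fun i j => c i * A i j) i j := by
    ext i j; simp [div_eq_inv_mul, mul_comm]
  rw [hrows, Matrix.det_mul_row, Matrix.det_mul_column, ← mul_assoc, Finset.prod_inv_distrib,
    inv_mul_cancel₀ (Finset.prod_ne_zero_iff.2 fun i _ => hc i), one_mul]

lemma Matrix.tendsto_det_of {α n R : Type*} [Fintype n] [DecidableEq n] [CommRing R]
    [TopologicalSpace R] [IsTopologicalRing R] {l : Filter α} {M : α → n → n → R}
    {B : n → n → R} (h : ∀ i j, Tendsto (fun a => M a i j) l (𝓝 (B i j))) :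
    Tendsto (fun a => (Matrix.of (M a)).det) l (𝓝 (Matrix.of B).det) :=
  (continuous_id.matrix_det.tendsto _).comp (tendsto_pi_nhds.2 fun i => tendsto_pi_nhds.2 (h i))

lemma D11edgeF_one (z : ℂ) :
    D11edgeF 1 (fun _ => z) = 1 / (Real.sqrt (2 * Real.pi ^ 3) : ℂ) * edgeWeight (z + conj z) := by
  simp [D11edgeF, ev0, edgeWeight]

lemma D11edgeF_eq_mul (k : ℕ) (hk : 0 < k) (lam : Fin k → ℂ) :
    D11edgeF k lam = D11edgeF 1 (fun _ => lam ⟨0, hk⟩) *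
      (Matrix.of fun i j : Fin (k - 1) => K11edge (lam (sh1 i)) (conj (lam (sh1 i)))
        (lam (sh1 j)) (conj (lam (sh1 j))) (lam ⟨0, hk⟩) (conj (lam ⟨0, hk⟩))).det := by
  rw [D11edgeF_one, D11edgeF, ev0, dif_pos hk, edgeWeight]

lemma D11bulkF_one (z : ℂ) : D11bulkF 1 (fun _ => z) = 1 / Real.pi := by
  simp [D11bulkF]

lemma D11bulkF_eq_mul (k : ℕ) (hk : 0 < k) (lam : Fin k → ℂ) :
    D11bulkF k lam = D11bulkF 1 (fun _ => lam ⟨0, hk⟩) *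
      (Matrix.of fun i j : Fin (k - 1) => K11bulk (lam (sh1 i)) (conj (lam (sh1 i)))
        (lam (sh1 j)) (conj (lam (sh1 j))) (lam ⟨0, hk⟩) (conj (lam ⟨0, hk⟩))).det := by
  rw [D11bulkF_one, D11bulkF, ev0, dif_pos hk]

/-- the edge overlap function degenerates to the bulk one deep inside the bulk. -/
theorem statement7 (k : ℕ) (hk : 1 ≤ k) (lam : Fin k → ℂ) :
    (∀ᶠ R : ℝ in atBot, D11edgeF 1 (fun _ : Fin 1 => (R : ℂ) + lam ⟨0, by omega⟩) ≠ 0) ∧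
    Tendsto (fun R : ℝ =>
        D11edgeF k (fun i => (R : ℂ) + lam i) /
          D11edgeF 1 (fun _ : Fin 1 => (R : ℂ) + lam ⟨0, by omega⟩))
      atBot
      (𝓝 (D11bulkF k lam / D11bulkF 1 (fun _ : Fin 1 => lam ⟨0, by omega⟩))) ∧
    D11bulkF k lam / D11bulkF 1 (fun _ : Fin 1 => lam ⟨0, by omega⟩) =
      (Real.pi : ℂ) * D11bulkF k lam := by
  set l := lam ⟨0, hk⟩
  have hbulk₁ : (1 / Real.pi : ℂ) ≠ 0 := by simp [Real.pi_ne_zero]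
  have hedge₁ : ∀ᶠ R : ℝ in atBot, D11edgeF 1 (fun _ : Fin 1 => (R : ℂ) + l) ≠ 0 := by
    filter_upwards [(tendsto_id.const_mul_atBot two_pos).eventually
      (eventually_edgeWeight_ne_zero_atBot (l + conj l))] with R hR
    rw [D11edgeF_one, map_add, Complex.conj_ofReal,
      show (R : ℂ) + l + (R + conj l) = ↑(2 * R) + (l + conj l) by push_cast; ring]
    exact mul_ne_zero (one_div_ne_zero (Complex.ofReal_ne_zero.2 (by positivity))) hR
  refine ⟨hedge₁, ?_, ?_⟩
  · rw [D11bulkF_eq_mul k hk, D11bulkF_one, mul_div_cancel_left₀ _ hbulk₁]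
    have hgauge := Matrix.tendsto_det_of fun i j => tendsto_K11edge_gauge_atBot (lam (sh1 i))
      (conj (lam (sh1 i))) (lam (sh1 j)) (conj (lam (sh1 j))) l (conj l)
    refine hgauge.congr' ?_
    filter_upwards [hedge₁] with R hR
    refine (Matrix.det_of_mul_div _ (fun _ => Complex.exp_ne_zero _) _).trans ?_
    rw [D11edgeF_eq_mul k hk, mul_div_cancel_left₀ _ hR]
    simp only [map_add, Complex.conj_ofReal]
    rfl
  · rw [D11bulkF_one, div_div_eq_mul_div, div_one, mul_comm]
end

section
/- Let n ∈ ℕ and let x ∈ ℂ satisfy x ≠ 0 and f_j(x) ≠ 0 for all 0 ≤ j ≤ n+1. Then Σ_{k=0}^n x^k / ( (k+1)! · f_k(x) · f_{k+1}(x) ) = (n+2−x) / ( x² · f_{n+1}(x) ) + (x−1)/x². -/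
open ComplexConjugate Filter MeasureTheory Topology

lemma epol_succ' (p : ℕ) (x : ℂ) :
    epol (p+1) x = epol p x + x^(p+1)/(Nat.factorial (p+1) : ℂ) := by
  simp [epol, Finset.sum_range_succ]

lemma fpol_succ' (p : ℕ) (x : ℂ) :
    fpol (p+1) x = ((p:ℂ)+2) * epol (p+1) x - x * epol p x := by
  have : p + 1 ≠ 0 := p.succ_ne_zero
  simp only [fpol, this, if_false, Nat.add_sub_cancel]
  push_cast; ring

lemma key_fpol (n : ℕ) (x : ℂ) :
    ((n:ℂ)+3 - x) * fpol (n+1) x - ((n:ℂ)+2-x) * fpol (n+2) x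
      = x^(n+3) / (Nat.factorial (n+2) : ℂ) := by
  have h1 : fpol (n+1) x = ((n:ℂ)+2) * epol (n+1) x - x * epol n x := fpol_succ' n x
  have h2 : fpol (n+2) x = ((n:ℂ)+3) * epol (n+2) x - x * epol (n+1) x := by
    have := fpol_succ' (n+1) x; push_cast at this ⊢; convert this using 2 <;> ring
  have e2 : epol (n+2) x = epol (n+1) x + x^(n+2)/(Nat.factorial (n+2) : ℂ) := epol_succ' (n+1) x
  have e1 : epol (n+1) x = epol n x + x^(n+1)/(Nat.factorial (n+1) : ℂ) := epol_succ' n x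
  have hf1 : (Nat.factorial (n+1) : ℂ) ≠ 0 := Nat.cast_ne_zero.2 (Nat.factorial_ne_zero _)
  have hfs : (Nat.factorial (n+2) : ℂ) = ((n:ℂ)+2) * (Nat.factorial (n+1) : ℂ) := by
    rw [Nat.factorial_succ]; push_cast; ring
  have hn2 : ((n:ℂ)+2) ≠ 0 := by
    have : ((n+2:ℕ):ℂ) ≠ 0 := Nat.cast_ne_zero.2 (by omega)
    push_cast at this; exact this
  set u := x^(n+1) / (Nat.factorial (n+1):ℂ) with hu
  have e2' : epol (n+2) x = epol (n+1) x + x*u/((n:ℂ)+2) := by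
    rw [e2, hfs, hu, pow_succ]
    field_simp
  have hrhs : x^(n+3) / (Nat.factorial (n+2) : ℂ) = x^2*u/((n:ℂ)+2) := by
    rw [hfs, hu, show n+3 = (n+1)+2 from rfl, pow_add]
    field_simp
  rw [h1, h2, e2', e1, hrhs]
  field_simp
  ring

/-- closed form for the partial sums `Φ_n(x)` (Lemma 2 of the paper). -/
theorem statement11 (n : ℕ) (x : ℂ) (hx : x ≠ 0)
    (hf : ∀ j : ℕ, j ≤ n + 1 → fpol j x ≠ 0) :
    ∑ k ∈ Finset.range (n + 1),
        x ^ k / ((Nat.factorial (k + 1) : ℂ) * fpol k x * fpol (k + 1) x) =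
      ((n : ℂ) + 2 - x) / (x ^ 2 * fpol (n + 1) x) + (x - 1) / x ^ 2 := by
  induction n with
  | zero =>
    have h1 : fpol 1 x = 2 + x := by
      simp [fpol, epol, Finset.sum_range_succ]; ring
    have hne : fpol 1 x ≠ 0 := hf 1 le_rfl
    rw [h1] at hne
    have h0 : fpol 0 x = 1 := by simp [fpol, epol]
    rw [Finset.sum_range_one]
    norm_num [h0, h1]
    field_simp
    ring
  | succ n IH =>
    have hIH := IH (fun j hj => hf j (by omega))
    have hf1 : fpol (n+1) x ≠ 0 := hf (n+1) (by omega)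
    have hf2 : fpol (n+2) x ≠ 0 := hf (n+2) (by omega)
    have hF : (Nat.factorial (n+2) : ℂ) ≠ 0 := Nat.cast_ne_zero.2 (Nat.factorial_ne_zero _)
    have hk' : (((n:ℂ)+3 - x) * fpol (n+1) x - ((n:ℂ)+2-x) * fpol (n+2) x)
        * (Nat.factorial (n+2) : ℂ) = x^(n+3) := (eq_div_iff hF).1 (key_fpol n x)
    have step : ((n:ℂ)+2-x)/(x^2 * fpol (n+1) x)
        + x^(n+1)/((Nat.factorial (n+2):ℂ) * fpol (n+1) x * fpol (n+2) x)
        = ((n:ℂ)+3-x)/(x^2 * fpol (n+2) x) := by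
      have hx2 : x^2 ≠ 0 := pow_ne_zero 2 hx
      rw [div_add_div _ _ (mul_ne_zero hx2 hf1)
          (mul_ne_zero (mul_ne_zero hF hf1) hf2),
        div_eq_div_iff (mul_ne_zero (mul_ne_zero hx2 hf1)
          (mul_ne_zero (mul_ne_zero hF hf1) hf2)) (mul_ne_zero hx2 hf2)]
      linear_combination (-(x^2 * fpol (n+1) x * fpol (n+2) x)) * hk'
    rw [Finset.sum_range_succ, hIH]
    push_cast
    linear_combination step
end
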